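/- (Characterization of N-valid implications) If an implication φ → ψ is N-valid, then at least one of the following holds: (1) ψ is N-valid, (2) φ is an atomic formula, or (3) φ is a negation. -/

import Mathlib

/- Formalization of Lorenzen dialogue games, following Felscher's presentation.

   Propositional formulas are built from atoms using ¬, ∧, ∨, →.  A dialogue
   for a formula φ is a sequence of moves beginning with Proponent (P)
   asserting φ at position 0, with O moving at odd positions and P at even
   positions.  Each later move attacks or defends an earlier move of the other
   player, according to the particle rules.  Structural rules (D10, D11, D12,
   D13, E, and the variants D10*, D10′) constrain dialogues further.  P wins
   if P made the last move and no moves are available to O; φ is S-valid if P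
   has an S-winning strategy for φ. -/

namespace LorenzenDialogues

/-- Propositional formulas: atoms, ¬, ∧, ∨, →. -/
inductive Formula : Type
  | atom : ℕ → Formula
  | neg  : Formula → Formula
  | and  : Formula → Formula → Formula
  | or   : Formula → Formula → Formula
  | imp  : Formula → Formula → Formula
deriving DecidableEq

/-- Statements: formulas together with the symbolic attacks `?`, `∧_L`, `∧_R`. -/
inductive Statement : Type
  | form  : Formula → Statement
  | qmark : Statement
  | andL  : Statement
  | andR  : Statement
deriving DecidableEq

/-- Particle rules, attack part: which statements attack which formulas. -/
inductive Attacks : Statement → Formula → Prop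
  | andL (a b : Formula) : Attacks .andL (.and a b)
  | andR (a b : Formula) : Attacks .andR (.and a b)
  | qmark (a b : Formula) : Attacks .qmark (.or a b)
  | imp (a b : Formula) : Attacks (.form a) (.imp a b)
  | neg (a : Formula) : Attacks (.form a) (.neg a)

/-- Particle rules, defense part: `Defends χ a s` means `s` is a permitted
    defense of the formula `χ` against the attack `a`.  (A negation admits
    no defense.) -/
inductive Defends : Formula → Statement → Statement → Prop
  | andL (a b : Formula) : Defends (.and a b) .andL (.form a)
  | andR (a b : Formula) : Defends (.and a b) .andR (.form b)
  | orL (a b : Formula) : Defends (.or a b) .qmark (.form a)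
  | orR (a b : Formula) : Defends (.or a b) .qmark (.form b)
  | imp (a b : Formula) : Defends (.imp a b) (.form a) (.form b)

/-- A move: a statement, a flag recording whether it is an attack (`true`)
    or a defense (`false`), and the position of the earlier move it attacks,
    resp. the earlier attack it defends against. -/
structure Move : Type where
  statement : Statement
  isAttack : Bool
  ref : ℕ
deriving DecidableEq

/-- A dialogue: the initial formula asserted by P at position 0, followed by
    the list of later moves (the move at list index `i` occupies position
    `i + 1`; O moves at odd positions, P at even positions). -/
structure Dialogue : Type where
  initial : Formula
  moves : List Move

/-- The statement asserted at position `n` (if any). -/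
def Dialogue.stmtAt (d : Dialogue) (n : ℕ) : Option Statement :=
  if n = 0 then some (.form d.initial) else (d.moves[n - 1]?).map Move.statement

/-- The move at position `n ≥ 1` (if any); position 0 is the initial assertion,
    not a move. -/
def Dialogue.moveAt (d : Dialogue) (n : ℕ) : Option Move :=
  if n = 0 then none else d.moves[n - 1]?

/-- The move `m`, played at position `n ≥ 1`, is permitted by the particle
    rules: it refers to an earlier position of the other player; if it is an
    attack, it attacks a formula asserted there, and if it is a defense, it
    responds to an attack played there, as the particle rules prescribe. -/
def MoveOK (d : Dialogue) (n : ℕ) (m : Move) : Prop :=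
  m.ref < n ∧ m.ref % 2 ≠ n % 2 ∧
    (m.isAttack = true →
      ∃ ψ, d.stmtAt m.ref = some (.form ψ) ∧ Attacks m.statement ψ) ∧
    (m.isAttack = false →
      ∃ a χ, d.moveAt m.ref = some a ∧ a.isAttack = true ∧
        d.stmtAt a.ref = some (.form χ) ∧ Defends χ a.statement m.statement)

/-- The dialogue adheres to the particle rules (every move is legal). -/
def ParticleOK (d : Dialogue) : Prop :=
  ∀ i m, d.moves[i]? = some m → MoveOK d (i + 1) m

/-- Position `n` carries a defense of the attack made at position `r`. -/
def IsDefenseOf (d : Dialogue) (n r : ℕ) : Prop :=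
  ∃ m, d.moveAt n = some m ∧ m.isAttack = false ∧ m.ref = r

/-- Position `n` carries an attack on the assertion made at position `r`. -/
def IsAttackOn (d : Dialogue) (n r : ℕ) : Prop :=
  ∃ m, d.moveAt n = some m ∧ m.isAttack = true ∧ m.ref = r

/-- Position `n` carries an attack. -/
def IsAttackPos (d : Dialogue) (n : ℕ) : Prop :=
  ∃ m, d.moveAt n = some m ∧ m.isAttack = true

/-- The attack at position `r` is still open (no defense against it has yet
    been played) before position `k`. -/
def OpenAt (d : Dialogue) (r k : ℕ) : Prop :=
  IsAttackPos d r ∧ ¬ ∃ j, j < k ∧ IsDefenseOf d j r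

/-- (D10) P may assert an atomic formula only after it has been asserted by O
    before. -/
def D10 (d : Dialogue) : Prop :=
  ∀ n p, n % 2 = 0 → d.stmtAt n = some (.form (.atom p)) →
    ∃ j, j < n ∧ j % 2 = 1 ∧ d.stmtAt j = some (.form (.atom p))

/-- (D10*) P may assert an atom `p` only if O has asserted `p` or `¬p`
    before. -/
def D10star (d : Dialogue) : Prop :=
  ∀ n p, n % 2 = 0 → d.stmtAt n = some (.form (.atom p)) →
    ∃ j, j < n ∧ j % 2 = 1 ∧
      (d.stmtAt j = some (.form (.atom p)) ∨
        d.stmtAt j = some (.form (.neg (.atom p))))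

/-- (D10′) P may assert an atom `p` only if O has asserted `p` or `¬¬p`
    before. -/
def D10prime (d : Dialogue) : Prop :=
  ∀ n p, n % 2 = 0 → d.stmtAt n = some (.form (.atom p)) →
    ∃ j, j < n ∧ j % 2 = 1 ∧
      (d.stmtAt j = some (.form (.atom p)) ∨
        d.stmtAt j = some (.form (.neg (.neg (.atom p)))))

/-- (D11) When defending, only the most recent open attack may be responded
    to: the attack defended against is open, and no strictly more recent open
    attack (against the same player) exists. -/
def D11 (d : Dialogue) : Prop :=
  ∀ n r, IsDefenseOf d n r →
    OpenAt d r n ∧ ¬ ∃ r', r < r' ∧ r' < n ∧ r' % 2 = r % 2 ∧ OpenAt d r' n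

/-- (D12) An attack may be answered at most once. -/
def D12 (d : Dialogue) : Prop :=
  ∀ n₁ n₂ r, IsDefenseOf d n₁ r → IsDefenseOf d n₂ r → n₁ = n₂

/-- (D13) A P-assertion (made at an even position) may be attacked at most
    once. -/
def D13 (d : Dialogue) : Prop :=
  ∀ n₁ n₂ r, r % 2 = 0 → IsAttackOn d n₁ r → IsAttackOn d n₂ r → n₁ = n₂

/-- (E) O can react only upon the immediately preceding P-statement. -/
def ERule (d : Dialogue) : Prop :=
  ∀ n m, n % 2 = 1 → d.moveAt n = some m → m.ref = n - 1

/-- A ruleset is a set of structural rules, i.e. a predicate on dialogues. -/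
def Ruleset := Dialogue → Prop

/-- Ruleset D = {D10, D11, D12, D13}. -/
def rulesetD : Ruleset := fun d => D10 d ∧ D11 d ∧ D12 d ∧ D13 d

/-- Ruleset E = D ∪ {E}. -/
def rulesetE : Ruleset := fun d => rulesetD d ∧ ERule d

/-- Ruleset CL = E − {D11, D12} = {D10, D13, E}. -/
def rulesetCL : Ruleset := fun d => D10 d ∧ D13 d ∧ ERule d

/-- Ruleset N = D − {D11, D12} = {D10, D13}. -/
def rulesetN : Ruleset := fun d => D10 d ∧ D13 d

/-- Ruleset E* = {D10*, D11, D12, D13, E}. -/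
def rulesetEstar : Ruleset :=
  fun d => D10star d ∧ D11 d ∧ D12 d ∧ D13 d ∧ ERule d

/-- Ruleset E′ = {D10′, D11, D12, D13, E}. -/
def rulesetEprime : Ruleset :=
  fun d => D10prime d ∧ D11 d ∧ D12 d ∧ D13 d ∧ ERule d

/-- An S-dialogue: a dialogue adhering to the particle rules and to the
    structural rules S. -/
def Legal (S : Ruleset) (d : Dialogue) : Prop := ParticleOK d ∧ S d

/-- Extend a dialogue by one move. -/
def Dialogue.extend (d : Dialogue) (m : Move) : Dialogue :=
  ⟨d.initial, d.moves ++ [m]⟩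

/-- The position about to be played. -/
def nextPos (d : Dialogue) : ℕ := d.moves.length + 1

/-- It is P's turn (the next position is even). -/
def PTurn (d : Dialogue) : Prop := nextPos d % 2 = 0

/-- The move `m` legally extends the S-dialogue `d`. -/
def LegalExt (S : Ruleset) (d : Dialogue) (m : Move) : Prop :=
  Legal S (d.extend m)

/-- `PWinningC S C d` holds when P, moving under the additional constraint
    `C` on P's own choices, has a winning strategy in the S-dialogue game
    continuing the dialogue `d`: at P's turn, P has a legal move (satisfying
    `C`) after which P is still winning; at O's turn, every legal O-move
    leads to a position where P is winning (in particular, if no O-move is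
    available, P has won: P made the last move and O cannot move). -/
inductive PWinningC (S : Ruleset) (C : Dialogue → Move → Prop) : Dialogue → Prop
  | pMove (d : Dialogue) (m : Move) (hturn : PTurn d)
      (hm : LegalExt S d m) (hC : C d m)
      (h : PWinningC S C (d.extend m)) : PWinningC S C d
  | oMoves (d : Dialogue) (hturn : ¬ PTurn d)
      (h : ∀ m, LegalExt S d m → PWinningC S C (d.extend m)) :
      PWinningC S C d

/-- P has a winning strategy continuing the S-dialogue `d`. -/
def PWinning (S : Ruleset) (d : Dialogue) : Prop :=
  PWinningC S (fun _ _ => True) d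

/-- `valid S φ` (written `⊨_S φ`): the opening assertion of φ is itself a
    legal S-dialogue and P has an S-winning strategy for φ. -/
def valid (S : Ruleset) (φ : Formula) : Prop :=
  Legal S ⟨φ, []⟩ ∧ PWinning S ⟨φ, []⟩

/-- Derivability in intuitionistic propositional logic (a Hilbert-style
    axiomatization with modus ponens). -/
inductive IProv : Formula → Prop
  | k (a b : Formula) : IProv (.imp a (.imp b a))
  | s (a b c : Formula) :
      IProv (.imp (.imp a (.imp b c)) (.imp (.imp a b) (.imp a c)))
  | andE1 (a b : Formula) : IProv (.imp (.and a b) a)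
  | andE2 (a b : Formula) : IProv (.imp (.and a b) b)
  | andI (a b : Formula) : IProv (.imp a (.imp b (.and a b)))
  | orI1 (a b : Formula) : IProv (.imp a (.or a b))
  | orI2 (a b : Formula) : IProv (.imp b (.or a b))
  | orE (a b c : Formula) :
      IProv (.imp (.imp a c) (.imp (.imp b c) (.imp (.or a b) c)))
  | negI (a b : Formula) :
      IProv (.imp (.imp a b) (.imp (.imp a (.neg b)) (.neg a)))
  | negE (a b : Formula) : IProv (.imp (.neg a) (.imp a b))
  | mp (a b : Formula) : IProv (.imp a b) → IProv a → IProv b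

/-- The stability principle ¬¬p → p for the atom `p`. -/
def stab (p : ℕ) : Formula := .imp (.neg (.neg (.atom p))) (.atom p)

/-- Stable logic: intuitionistic propositional logic plus all instances of
    the stability scheme ¬¬p → p for atoms p, closed under modus ponens. -/
inductive StableProv : Formula → Prop
  | intuit (a : Formula) : IProv a → StableProv a
  | stab (p : ℕ) : StableProv (stab p)
  | mp (a b : Formula) : StableProv (.imp a b) → StableProv a → StableProv b

/-- Boolean evaluation of a formula under a valuation of its atoms. -/
def Formula.eval (v : ℕ → Bool) : Formula → Bool
  | .atom p => v p
  | .neg a => !(a.eval v)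
  | .and a b => a.eval v && b.eval v
  | .or a b => a.eval v || b.eval v
  | .imp a b => !(a.eval v) || b.eval v

/-- A classical tautology: true under every Boolean valuation. -/
def Tautology (φ : Formula) : Prop := ∀ v, φ.eval v = true

/-- Uniform substitution of formulas for atoms, applied homomorphically. -/
def Formula.subst (σ : ℕ → Formula) : Formula → Formula
  | .atom p => σ p
  | .neg a => .neg (a.subst σ)
  | .and a b => .and (a.subst σ) (b.subst σ)
  | .or a b => .or (a.subst σ) (b.subst σ)
  | .imp a b => .imp (a.subst σ) (b.subst σ)

/-- The atoms occurring in a formula. -/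
def Formula.atoms : Formula → List ℕ
  | .atom p => [p]
  | .neg a => a.atoms
  | .and a b => a.atoms ++ b.atoms
  | .or a b => a.atoms ++ b.atoms
  | .imp a b => a.atoms ++ b.atoms

/-- Conjunction of a nonempty list of formulas. -/
def conjList (f : Formula) : List Formula → Formula
  | [] => f
  | g :: gs => .and f (conjList g gs)

/-- The conjunction (¬¬p → p) ∧ … of stability instances for the atoms
    `p :: ps`. -/
def stabConj (p : ℕ) (ps : List ℕ) : Formula :=
  conjList (stab p) (ps.map stab)

/-! Without (D12), O may answer the same P-attack again and again, so P can never win once he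
has attacked a formula that admits a defence: in a winning strategy P attacks only negations.
If `φ` is neither atomic nor a negation, P therefore cannot attack O's opening assertion `φ`
and must defend by asserting `ψ`. From then on each P-move of the strategy for `φ → ψ` can be
replayed in a dialogue for `ψ`: attacks on negations O asserted there, defences against attacks
O made there, while (D10) never needs `φ` because it is not an atom. The only exception is a
repetition of the defence `ψ`; O answers it by attacking the new copy of `ψ` as she attacked
`ψ` in the replayed dialogue, and the play continues. -/

namespace Dialogue

variable (d : Dialogue) (m : Move)

@[simp] lemma stmtAt_zero : d.stmtAt 0 = some (.form d.initial) := rfl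

@[simp] lemma length_extend : (d.extend m).moves.length = d.moves.length + 1 := by
  simp [extend]

lemma le_length_of_stmtAt_eq_some {d : Dialogue} {n : ℕ} {s : Statement}
    (h : d.stmtAt n = some s) : n ≤ d.moves.length := by
  unfold stmtAt at h
  split_ifs at h with hn
  · omega
  · obtain ⟨_, hm, -⟩ := Option.map_eq_some_iff.mp h
    have := (List.getElem?_eq_some_iff.mp hm).1
    omega

lemma ne_zero_of_moveAt_eq_some {d : Dialogue} {n : ℕ} {m : Move}
    (h : d.moveAt n = some m) : n ≠ 0 := by
  rintro rfl
  simp [moveAt] at h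

lemma le_length_of_moveAt_eq_some {d : Dialogue} {n : ℕ} {m : Move}
    (h : d.moveAt n = some m) : n ≤ d.moves.length := by
  have hn := ne_zero_of_moveAt_eq_some h
  rw [moveAt, if_neg hn] at h
  have := (List.getElem?_eq_some_iff.mp h).1
  omega

lemma stmtAt_of_moveAt {d : Dialogue} {n : ℕ} {m : Move} (h : d.moveAt n = some m) :
    d.stmtAt n = some m.statement := by
  have hn := ne_zero_of_moveAt_eq_some h
  rw [moveAt, if_neg hn] at h
  rw [stmtAt, if_neg hn, h, Option.map_some]

variable {d} {n : ℕ}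

lemma stmtAt_extend_of_le (h : n ≤ d.moves.length) : (d.extend m).stmtAt n = d.stmtAt n := by
  unfold stmtAt
  split_ifs
  · rfl
  · rw [extend, List.getElem?_append_left (by omega)]

lemma moveAt_extend_of_le (h : n ≤ d.moves.length) : (d.extend m).moveAt n = d.moveAt n := by
  unfold moveAt
  split_ifs
  · rfl
  · rw [extend, List.getElem?_append_left (by omega)]

variable (d)

lemma stmtAt_extend_self : (d.extend m).stmtAt (d.moves.length + 1) = some m.statement := by
  simp [stmtAt, extend]

lemma moveAt_extend_self : (d.extend m).moveAt (d.moves.length + 1) = some m := by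
  simp [moveAt, extend]

lemma moveAt_extend_eq_some_iff {d : Dialogue} {m m' : Move} {n : ℕ} :
    (d.extend m).moveAt n = some m' ↔ d.moveAt n = some m' ∨ (n = d.moves.length + 1 ∧ m' = m) := by
  constructor
  · intro h
    have hn := le_length_of_moveAt_eq_some h
    rw [length_extend] at hn
    rcases hn.lt_or_eq with hn | rfl
    · exact .inl (by rwa [moveAt_extend_of_le m (by omega)] at h)
    · rw [moveAt_extend_self] at h
      exact .inr ⟨rfl, (Option.some.inj h).symm⟩
  · rintro (h | ⟨rfl, rfl⟩)
    · rwa [moveAt_extend_of_le m (le_length_of_moveAt_eq_some h)]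
    · exact moveAt_extend_self d m'

lemma ref_lt_of_moveAt {d : Dialogue} {n : ℕ} {m : Move} (hd : ParticleOK d)
    (h : d.moveAt n = some m) : m.ref < n := by
  have hn := ne_zero_of_moveAt_eq_some h
  rw [moveAt, if_neg hn] at h
  have := (hd _ _ h).1
  omega

lemma exists_stmtAt_eq_some {d : Dialogue} {n : ℕ} (h : n ≤ d.moves.length) :
    ∃ s, d.stmtAt n = some s := by
  rcases Nat.eq_zero_or_pos n with rfl | hn
  · exact ⟨_, stmtAt_zero d⟩
  · rw [stmtAt, if_neg hn.ne', List.getElem?_eq_getElem (by omega)]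
    exact ⟨_, rfl⟩

end Dialogue

open Dialogue

lemma pTurn_extend {d : Dialogue} {m : Move} : PTurn (d.extend m) ↔ ¬ PTurn d := by
  simp only [PTurn, nextPos, length_extend]
  omega

lemma not_pTurn_iff {d : Dialogue} : ¬ PTurn d ↔ (d.moves.length + 1) % 2 = 1 := by
  simp only [PTurn, nextPos]
  omega

def OAsserted (d : Dialogue) (χ : Formula) : Prop :=
  ∃ j, j % 2 = 1 ∧ d.stmtAt j = some (.form χ)

def Attacked (d : Dialogue) (r : ℕ) : Prop :=
  ∃ n, IsAttackOn d n r

/-- An attack by `α` on an assertion of `χ`, made by O if `b = 1` and by P if `b = 0`. -/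
def HasAttack (d : Dialogue) (b : ℕ) (χ : Formula) (α : Statement) : Prop :=
  ∃ n m, d.moveAt n = some m ∧ n % 2 = b ∧ m.isAttack = true ∧ m.statement = α ∧
    d.stmtAt m.ref = some (.form χ)

section Extend

variable {d : Dialogue} {m : Move}

lemma oAsserted_extend_iff {χ : Formula} :
    OAsserted (d.extend m) χ ↔ OAsserted d χ ∨ (¬ PTurn d ∧ m.statement = .form χ) := by
  simp only [OAsserted, PTurn, nextPos]
  constructor
  · rintro ⟨j, hj, hst⟩
    have hjle := le_length_of_stmtAt_eq_some hst
    rw [length_extend] at hjle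
    rcases hjle.lt_or_eq with hjle | rfl
    · exact .inl ⟨j, hj, by rwa [stmtAt_extend_of_le m (by omega)] at hst⟩
    · rw [stmtAt_extend_self] at hst
      exact .inr ⟨by omega, Option.some.inj hst⟩
  · rintro (⟨j, hj, hst⟩ | ⟨hodd, hst⟩)
    · exact ⟨j, hj, by rwa [stmtAt_extend_of_le m (le_length_of_stmtAt_eq_some hst)]⟩
    · exact ⟨d.moves.length + 1, by omega, by rw [stmtAt_extend_self, hst]⟩

lemma OAsserted.extend {χ : Formula} (h : OAsserted d χ) : OAsserted (d.extend m) χ :=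
  oAsserted_extend_iff.2 (.inl h)

lemma isAttackOn_extend_iff {n r : ℕ} :
    IsAttackOn (d.extend m) n r ↔
      IsAttackOn d n r ∨ (n = d.moves.length + 1 ∧ m.isAttack = true ∧ m.ref = r) := by
  simp only [IsAttackOn, moveAt_extend_eq_some_iff]
  constructor
  · rintro ⟨m', h | ⟨rfl, rfl⟩, hatk, href⟩
    · exact .inl ⟨m', h, hatk, href⟩
    · exact .inr ⟨rfl, hatk, href⟩
  · rintro (⟨m', h, hatk, href⟩ | ⟨rfl, hatk, href⟩)
    · exact ⟨m', .inl h, hatk, href⟩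
    · exact ⟨m, .inr ⟨rfl, rfl⟩, hatk, href⟩

lemma attacked_extend_iff {r : ℕ} :
    Attacked (d.extend m) r ↔ Attacked d r ∨ (m.isAttack = true ∧ m.ref = r) := by
  simp only [Attacked, isAttackOn_extend_iff]
  constructor
  · rintro ⟨n, h | ⟨-, h⟩⟩
    · exact .inl ⟨n, h⟩
    · exact .inr h
  · rintro (⟨n, h⟩ | h)
    · exact ⟨n, .inl h⟩
    · exact ⟨_, .inr ⟨rfl, h⟩⟩

lemma Attacked.extend {r : ℕ} (h : Attacked d r) : Attacked (d.extend m) r :=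
  attacked_extend_iff.2 (.inl h)

lemma Attacked.lt_length {r : ℕ} (hd : ParticleOK d) (h : Attacked d r) :
    r < d.moves.length := by
  obtain ⟨n, m, hmv, -, rfl⟩ := h
  have := ref_lt_of_moveAt hd hmv
  have := le_length_of_moveAt_eq_some hmv
  omega

lemma hasAttack_extend_iff (hd : ParticleOK d) (hr : m.ref ≤ d.moves.length) {b : ℕ}
    {χ : Formula} {α : Statement} :
    HasAttack (d.extend m) b χ α ↔ HasAttack d b χ α ∨
      ((d.moves.length + 1) % 2 = b ∧ m.isAttack = true ∧ m.statement = α ∧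
        d.stmtAt m.ref = some (.form χ)) := by
  simp only [HasAttack, moveAt_extend_eq_some_iff]
  constructor
  · rintro ⟨n, m', h | ⟨rfl, rfl⟩, hb, hatk, hα, hst⟩
    · have hr' : m'.ref ≤ d.moves.length :=
        (ref_lt_of_moveAt hd h).le.trans (le_length_of_moveAt_eq_some h)
      rw [stmtAt_extend_of_le m hr'] at hst
      exact .inl ⟨n, m', h, hb, hatk, hα, hst⟩
    · rw [stmtAt_extend_of_le m' hr] at hst
      exact .inr ⟨hb, hatk, hα, hst⟩
  · rintro (⟨n, m', h, hb, hatk, hα, hst⟩ | ⟨hb, hatk, hα, hst⟩)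
    · exact ⟨n, m', .inl h, hb, hatk, hα,
        by rwa [stmtAt_extend_of_le m (le_length_of_stmtAt_eq_some hst)]⟩
    · exact ⟨_, m, .inr ⟨rfl, rfl⟩, hb, hatk, hα, by rwa [stmtAt_extend_of_le m hr]⟩

lemma HasAttack.extend (hd : ParticleOK d) (hr : m.ref ≤ d.moves.length) {b : ℕ}
    {χ : Formula} {α : Statement} (h : HasAttack d b χ α) : HasAttack (d.extend m) b χ α :=
  (hasAttack_extend_iff hd hr).2 (.inl h)

lemma HasAttack.attacks {d : Dialogue} (hd : ParticleOK d) {b : ℕ} {χ : Formula}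
    {α : Statement} (h : HasAttack d b χ α) : Attacks α χ := by
  obtain ⟨n, m, hmv, -, hatk, rfl, hst⟩ := h
  have hn := ne_zero_of_moveAt_eq_some hmv
  rw [Dialogue.moveAt, if_neg hn] at hmv
  obtain ⟨χ', hst', hA⟩ := (hd _ _ hmv).2.2.1 hatk
  rw [hst] at hst'
  cases hst'
  exact hA

lemma exists_hasAttack_initial {e : Dialogue} (he : ParticleOK e) (hne : e.moves ≠ []) :
    ∃ α, HasAttack e 1 e.initial α := by
  obtain ⟨m, l, hm⟩ := List.exists_cons_of_ne_nil hne
  have hmv : e.moveAt 1 = some m := by simp [Dialogue.moveAt, hm]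
  obtain ⟨hr, -, -, hdefends⟩ := he 0 m (by simp [hm])
  obtain hr : m.ref = 0 := by omega
  cases hatk : m.isAttack
  · obtain ⟨a, -, ha, -⟩ := hdefends hatk
    simp [hr, Dialogue.moveAt] at ha
  · exact ⟨m.statement, 1, m, hmv, rfl, hatk, rfl, by rw [hr, stmtAt_zero]⟩

end Extend

section Legality

variable {d : Dialogue} {m : Move}

lemma moveOK_extend_iff (hd : ParticleOK d) {n : ℕ} {m' : Move}
    (hn : n ≤ d.moves.length + 1) : MoveOK (d.extend m) n m' ↔ MoveOK d n m' := by
  unfold MoveOK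
  refine and_congr_right fun hlt => and_congr_right fun _ => and_congr ?_ ?_
  · rw [stmtAt_extend_of_le m (by omega)]
  · refine imp_congr_right fun _ => exists_congr fun a => exists_congr fun χ => ?_
    rw [moveAt_extend_of_le m (by omega)]
    constructor
    · rintro ⟨ha, hatk, hst, hdef⟩
      rw [stmtAt_extend_of_le m ((ref_lt_of_moveAt hd ha).le.trans (by omega))] at hst
      exact ⟨ha, hatk, hst, hdef⟩
    · rintro ⟨ha, hatk, hst, hdef⟩
      exact ⟨ha, hatk, by rwa [stmtAt_extend_of_le m (le_length_of_stmtAt_eq_some hst)], hdef⟩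

lemma particleOK_extend_iff (hd : ParticleOK d) :
    ParticleOK (d.extend m) ↔ MoveOK d (d.moves.length + 1) m := by
  rw [← moveOK_extend_iff hd le_rfl]
  constructor
  · intro h
    exact h d.moves.length m (by simp [Dialogue.extend])
  · intro h i m' hi
    rw [Dialogue.extend, List.getElem?_append] at hi
    split_ifs at hi with hlt
    · exact (moveOK_extend_iff hd (by omega)).2 (hd i m' hi)
    · obtain ⟨hlen, rfl⟩ := List.getElem?_eq_some_iff.mp hi
      obtain rfl : i = d.moves.length := by rw [List.length_singleton] at hlen; omega
      simpa using h

def D10Admits (d : Dialogue) (m : Move) : Prop :=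
  PTurn d → ∀ p, m.statement = .form (.atom p) → OAsserted d (.atom p)

def D13Admits (d : Dialogue) (m : Move) : Prop :=
  m.isAttack = true → m.ref % 2 = 0 → ¬ Attacked d m.ref

lemma D10.extend (h : D10 d) (hm : D10Admits d m) : D10 (d.extend m) := by
  intro n p hn hst
  have hnle := le_length_of_stmtAt_eq_some hst
  rw [length_extend] at hnle
  rcases hnle.lt_or_eq with hnle | rfl
  · rw [stmtAt_extend_of_le m (by omega)] at hst
    obtain ⟨j, hj, hjodd, hjst⟩ := h n p hn hst
    exact ⟨j, hj, hjodd, by rwa [stmtAt_extend_of_le m (by omega)]⟩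
  · rw [stmtAt_extend_self] at hst
    obtain ⟨j, hjodd, hjst⟩ := hm hn p (Option.some.inj hst)
    have := le_length_of_stmtAt_eq_some hjst
    exact ⟨j, by omega, hjodd, by rwa [stmtAt_extend_of_le m this]⟩

lemma D10Admits.of_extend (h : D10 (d.extend m)) : D10Admits d m := by
  intro hP p hst
  obtain ⟨j, hj, hjodd, hjst⟩ := h (d.moves.length + 1) p hP (by rw [stmtAt_extend_self, hst])
  exact ⟨j, hjodd, by rwa [stmtAt_extend_of_le m (by omega)] at hjst⟩

lemma D13.extend (h : D13 d) (hm : D13Admits d m) : D13 (d.extend m) := by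
  have fresh : ∀ n r, r % 2 = 0 → IsAttackOn d n r → m.isAttack = true → m.ref = r → False :=
    fun n r hr hn hatk href => hm hatk (href ▸ hr) (href ▸ ⟨n, hn⟩)
  intro n₁ n₂ r hr h₁ h₂
  rcases isAttackOn_extend_iff.1 h₁ with h₁ | ⟨rfl, hatk₁, href₁⟩ <;>
    rcases isAttackOn_extend_iff.1 h₂ with h₂ | ⟨rfl, hatk₂, href₂⟩
  · exact h n₁ n₂ r hr h₁ h₂
  · exact (fresh n₁ r hr h₁ hatk₂ href₂).elim
  · exact (fresh n₂ r hr h₂ hatk₁ href₁).elim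
  · rfl

lemma D13Admits.of_extend (h : D13 (d.extend m)) : D13Admits d m := by
  rintro hatk hr ⟨n, hn⟩
  have := h n _ m.ref hr (isAttackOn_extend_iff.2 (.inl hn))
    (isAttackOn_extend_iff.2 (.inr ⟨rfl, hatk, rfl⟩))
  obtain ⟨m', hmv, -⟩ := hn
  have := le_length_of_moveAt_eq_some hmv
  omega

lemma legalExt_rulesetN_iff (hd : Legal rulesetN d) :
    LegalExt rulesetN d m ↔
      MoveOK d (d.moves.length + 1) m ∧ D10Admits d m ∧ D13Admits d m := by
  obtain ⟨hpd, h10, h13⟩ := hd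
  rw [LegalExt, Legal, particleOK_extend_iff hpd]
  exact ⟨fun ⟨hok, h10', h13'⟩ => ⟨hok, .of_extend h10', .of_extend h13'⟩,
    fun ⟨hok, h10', h13'⟩ => ⟨hok, h10.extend h10', h13.extend h13'⟩⟩

end Legality

lemma Defends.eq_of_imp {a b : Formula} {α s : Statement} (h : Defends (.imp a b) α s) :
    s = .form b := by
  cases h; rfl

lemma Attacks.eq_of_neg {a : Formula} {α : Statement} (h : Attacks α (.neg a)) :
    α = .form a := by
  cases h; rfl

lemma not_defends_neg {a : Formula} {α s : Statement} : ¬ Defends (.neg a) α s := nofun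

lemma Attacks.exists_defends {χ : Formula} {α : Statement} (h : Attacks α χ)
    (hχ : ∀ a, χ ≠ .neg a) : ∃ s, Defends χ α s := by
  cases h with
  | andL a b => exact ⟨_, .andL a b⟩
  | andR a b => exact ⟨_, .andR a b⟩
  | qmark a b => exact ⟨_, .orL a b⟩
  | imp a b => exact ⟨_, .imp a b⟩
  | neg a => exact (hχ a rfl).elim

section Defensible

variable {C : Dialogue → Move → Prop} {d : Dialogue} {m : Move}

theorem not_pWinningC_of_hasAttack_defends (hwin : PWinningC rulesetN C d)
    (hd : Legal rulesetN d) {χ : Formula} {α s : Statement} (hatk : HasAttack d 0 χ α)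
    (hdef : Defends χ α s) : False := by
  induction hwin with
  | pMove d m _ hm _ _ ih =>
    have hr := ((legalExt_rulesetN_iff hd).1 hm).1.1
    exact ih hm (hatk.extend hd.1 (by omega))
  | oMoves d hturn _ ih =>
    obtain ⟨n, a, ha, hn, ha_atk, rfl, hst⟩ := hatk
    have hnle := le_length_of_moveAt_eq_some ha
    have hO := not_pTurn_iff.1 hturn
    have hm : LegalExt rulesetN d ⟨s, false, n⟩ := by
      refine (legalExt_rulesetN_iff hd).2 ⟨⟨by dsimp only; omega, by dsimp only; omega, nofun,
        fun _ => ⟨a, χ, ha, ha_atk, hst, hdef⟩⟩, fun hP => absurd hP (by omega), nofun⟩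
    exact ih _ hm hm
      ((HasAttack.extend hd.1 (by dsimp only; omega)) ⟨n, a, ha, hn, ha_atk, rfl, hst⟩)

lemma PWinningC.exists_neg_of_pAttack (hwin : PWinningC rulesetN C (d.extend m))
    (hd : Legal rulesetN d) (hm : LegalExt rulesetN d m) (hP : PTurn d)
    (hatk : m.isAttack = true) :
    ∃ a, d.stmtAt m.ref = some (.form (.neg a)) ∧ m.statement = .form a := by
  obtain ⟨⟨hr, -, hattacks, -⟩, -⟩ := (legalExt_rulesetN_iff hd).1 hm
  obtain ⟨χ, hst, hA⟩ := hattacks hatk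
  by_cases hχ : ∃ a, χ = .neg a
  · obtain ⟨a, rfl⟩ := hχ
    exact ⟨a, hst, hA.eq_of_neg⟩
  · simp only [not_exists] at hχ
    obtain ⟨s, hdef⟩ := hA.exists_defends hχ
    refine (not_pWinningC_of_hasAttack_defends hwin hm
      ⟨d.moves.length + 1, m, moveAt_extend_self d m, hP, hatk, rfl, ?_⟩ hdef).elim
    rwa [stmtAt_extend_of_le m (by omega)]

end Defensible

def pPositions (e : Dialogue) : Set ℕ := {p | p % 2 = 0 ∧ p ≤ e.moves.length}

lemma mem_pPositions_extend {e : Dialogue} {m : Move} {p : ℕ}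
    (hp : p ∈ pPositions (e.extend m)) : p = e.moves.length + 1 ∨ p ∈ pPositions e := by
  obtain ⟨hp, hle⟩ := hp
  rw [length_extend] at hle
  rcases hle.lt_or_eq with hle | rfl
  · exact .inr ⟨hp, by omega⟩
  · exact .inl rfl

lemma pPositions_extend_of_not_pTurn {e : Dialogue} (m : Move) (he : ¬ PTurn e) :
    pPositions (e.extend m) = pPositions e := by
  ext p
  have := not_pTurn_iff.1 he
  simp only [pPositions, Set.mem_ofPred_eq, length_extend]
  omega

lemma injOn_update_pPositions_extend {ι : ℕ → ℕ} {e : Dialogue} (m : Move)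
    (h : Set.InjOn ι (pPositions e)) {N : ℕ} (hN : ∀ p ∈ pPositions e, ι p ≠ N) :
    Set.InjOn (Function.update ι (e.moves.length + 1) N) (pPositions (e.extend m)) := by
  have hnew : e.moves.length + 1 ∉ pPositions e := fun hp => by have := hp.2; omega
  have hold : Set.EqOn ι (Function.update ι (e.moves.length + 1) N) (pPositions e) :=
    fun p hp => (Function.update_of_ne (ne_of_mem_of_not_mem hp hnew) _ _).symm
  refine ((Set.injOn_insert hnew).2 ⟨h.congr hold, ?_⟩).mono fun p hp => ?_
  · rintro ⟨p, hp, hpN⟩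
    rw [Function.update_self, ← hold hp] at hpN
    exact hN p hp hpN
  · rcases mem_pPositions_extend hp with rfl | hp
    · exact .inl rfl
    · exact .inr hp

/-- The invariant relating a dialogue `d` for `φ → ψ` to a dialogue `e` for `ψ`: every move of `e`
is mirrored in `d`, and `ι` sends each P-assertion of `e` to its mirror image in `d`. -/
structure Simulation (φ ψ : Formula) (d e : Dialogue) (ι : ℕ → ℕ) : Prop where
  initial_eq : e.initial = ψ
  legal_left : Legal rulesetN d
  legal_right : Legal rulesetN e
  oAsserted : ∀ χ, OAsserted d χ → OAsserted e χ ∨ χ = φ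
  oAttack : ∀ χ α, HasAttack d 1 χ α → HasAttack e 1 χ α ∨ (χ = .imp φ ψ ∧ α = .form φ)
  pAttack_neg : ∀ χ α, HasAttack e 0 χ α → ∃ a, χ = .neg a
  embed_even : ∀ p ∈ pPositions e, ι p % 2 = 0
  embed_stmtAt : ∀ p ∈ pPositions e, d.stmtAt (ι p) = e.stmtAt p
  embed_attacked : ∀ p ∈ pPositions e, Attacked d (ι p) → Attacked e p
  embed_injOn : Set.InjOn ι (pPositions e)

/-- P's repetitions of the defence `ψ` against O's opening attack produce these. -/
def FreshCopy (ψ : Formula) (d e : Dialogue) (ι : ℕ → ℕ) (c : ℕ) : Prop :=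
  c % 2 = 0 ∧ d.stmtAt c = some (.form ψ) ∧ ¬ Attacked d c ∧ ∀ p ∈ pPositions e, ι p ≠ c

namespace Simulation

variable {φ ψ : Formula} {d e : Dialogue} {ι : ℕ → ℕ}

lemma embed_le (hs : Simulation φ ψ d e ι) {p : ℕ} (hp : p ∈ pPositions e) :
    ι p ≤ d.moves.length := by
  obtain ⟨s, hst⟩ := Dialogue.exists_stmtAt_eq_some hp.2
  exact le_length_of_stmtAt_eq_some ((hs.embed_stmtAt p hp).trans hst)

lemma extend_left (hs : Simulation φ ψ d e ι) {m : Move} (hm : LegalExt rulesetN d m)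
    (hOA : ¬ PTurn d → ∀ χ, m.statement = .form χ → OAsserted e χ)
    (hOAtt : ¬ PTurn d → m.isAttack = true → ∀ χ, d.stmtAt m.ref = some (.form χ) →
      HasAttack e 1 χ m.statement)
    (hfresh : m.isAttack = true → ∀ p ∈ pPositions e, ι p ≠ m.ref) :
    Simulation φ ψ (d.extend m) e ι where
  initial_eq := hs.initial_eq
  legal_left := hm
  legal_right := hs.legal_right
  oAsserted χ h := by
    rcases oAsserted_extend_iff.1 h with h | ⟨hO, hst⟩
    · exact hs.oAsserted χ h
    · exact .inl (hOA hO χ hst)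
  oAttack χ α h := by
    have hr := ((legalExt_rulesetN_iff hs.legal_left).1 hm).1.1
    rcases (hasAttack_extend_iff hs.legal_left.1 (by omega)).1 h with h | ⟨hO, hatk, rfl, hst⟩
    · exact hs.oAttack χ _ h
    · exact .inl (hOAtt (not_pTurn_iff.2 (by omega)) hatk χ hst)
  pAttack_neg := hs.pAttack_neg
  embed_even := hs.embed_even
  embed_stmtAt p hp := by rw [stmtAt_extend_of_le m (hs.embed_le hp), hs.embed_stmtAt p hp]
  embed_attacked p hp h := by
    rcases attacked_extend_iff.1 h with h | ⟨hatk, hr⟩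
    · exact hs.embed_attacked p hp h
    · exact (hfresh hatk p hp hr.symm).elim
  embed_injOn := hs.embed_injOn

lemma extend_pMoves (hs : Simulation φ ψ d e ι) (hPd : PTurn d) (hPe : PTurn e)
    {m_d m_e : Move} (hmd : LegalExt rulesetN d m_d) (hme : LegalExt rulesetN e m_e)
    (hstmt : m_e.statement = m_d.statement)
    (hneg : m_e.isAttack = true → ∃ a, e.stmtAt m_e.ref = some (.form (.neg a))) :
    Simulation φ ψ (d.extend m_d) (e.extend m_e)
      (Function.update ι (e.moves.length + 1) (d.moves.length + 1)) := by
  obtain ⟨⟨hrd, hpard, -⟩, -⟩ := (legalExt_rulesetN_iff hs.legal_left).1 hmd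
  obtain ⟨⟨hre, hpare, -⟩, -⟩ := (legalExt_rulesetN_iff hs.legal_right).1 hme
  simp only [PTurn, nextPos] at hPd hPe
  have old : ∀ p ∈ pPositions e,
      Function.update ι (e.moves.length + 1) (d.moves.length + 1) p = ι p :=
    fun p hp => Function.update_of_ne (by have := hp.2; omega) _ _
  refine ⟨hs.initial_eq, hmd, hme, fun χ h => ?_, fun χ α h => ?_, fun χ α h => ?_,
    fun p hp => ?_, fun p hp => ?_, fun p hp h => ?_,
    injOn_update_pPositions_extend m_e hs.embed_injOn fun p hp => by have := hs.embed_le hp; omega⟩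
  · rcases oAsserted_extend_iff.1 h with h | ⟨hO, -⟩
    · exact (hs.oAsserted χ h).imp_left OAsserted.extend
    · exact absurd hPd hO
  · rcases (hasAttack_extend_iff hs.legal_left.1 (by omega)).1 h with h | ⟨hO, -⟩
    · exact (hs.oAttack χ α h).imp_left (HasAttack.extend hs.legal_right.1 (by omega))
    · omega
  · rcases (hasAttack_extend_iff hs.legal_right.1 (by omega)).1 h with h | ⟨-, hatk, -, hst⟩
    · exact hs.pAttack_neg χ α h
    · obtain ⟨a, ha⟩ := hneg hatk
      exact ⟨a, by simpa using hst.symm.trans ha⟩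
  · rcases mem_pPositions_extend hp with rfl | hp
    · simpa using hPd
    · rw [old p hp]; exact hs.embed_even p hp
  · rcases mem_pPositions_extend hp with rfl | hp
    · simp only [Function.update_self, stmtAt_extend_self, hstmt]
    · rw [old p hp, stmtAt_extend_of_le m_d (hs.embed_le hp), hs.embed_stmtAt p hp,
        stmtAt_extend_of_le m_e hp.2]
  · rcases mem_pPositions_extend hp with rfl | hp
    · rw [Function.update_self] at h
      exact absurd (h.lt_length hmd.1) (by simp)
    · rw [old p hp] at h
      rcases attacked_extend_iff.1 h with h | ⟨-, hr⟩
      · exact (hs.embed_attacked p hp h).extend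
      · have := hs.embed_even p hp
        omega

lemma extend_oAttack (hs : Simulation φ ψ d e ι) (hOd : ¬ PTurn d) (hOe : ¬ PTurn e)
    {m : Move} (hme : LegalExt rulesetN e m) (hatk : m.isAttack = true)
    (hmd : LegalExt rulesetN d ⟨m.statement, true, ι m.ref⟩) :
    Simulation φ ψ (d.extend ⟨m.statement, true, ι m.ref⟩) (e.extend m) ι := by
  obtain ⟨⟨hre, hpare, hattacks, -⟩, -⟩ := (legalExt_rulesetN_iff hs.legal_right).1 hme
  obtain ⟨χ, hχ, -⟩ := hattacks hatk
  have hOd' := not_pTurn_iff.1 hOd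
  have hOe' := not_pTurn_iff.1 hOe
  have href : m.ref ∈ pPositions e := ⟨by omega, by omega⟩
  have hχd : d.stmtAt (ι m.ref) = some (.form χ) := (hs.embed_stmtAt _ href).trans hχ
  have hPos := pPositions_extend_of_not_pTurn m hOe
  refine ⟨hs.initial_eq, hmd, hme, fun χ' h => ?_, fun χ' α h => ?_, fun χ' α h => ?_,
    hPos ▸ hs.embed_even, fun p hp => ?_, fun p hp h => ?_, hPos ▸ hs.embed_injOn⟩
  · rcases oAsserted_extend_iff.1 h with h | ⟨-, hst⟩
    · exact (hs.oAsserted χ' h).imp_left OAsserted.extend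
    · exact .inl (oAsserted_extend_iff.2 (.inr ⟨hOe, hst⟩))
  · rcases (hasAttack_extend_iff hs.legal_left.1 (le_length_of_stmtAt_eq_some hχd)).1 h with
      h | ⟨-, -, hα, hst⟩
    · exact (hs.oAttack χ' α h).imp_left (HasAttack.extend hs.legal_right.1 (by omega))
    · obtain rfl : χ' = χ := by simpa [hχd] using hst.symm
      exact .inl ((hasAttack_extend_iff hs.legal_right.1 (by omega)).2
        (.inr ⟨by omega, hatk, hα, hχ⟩))
  · rcases (hasAttack_extend_iff hs.legal_right.1 (by omega)).1 h with h | ⟨hpar, -⟩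
    · exact hs.pAttack_neg χ' α h
    · omega
  · rw [hPos] at hp
    rw [stmtAt_extend_of_le _ (hs.embed_le hp), hs.embed_stmtAt p hp,
      stmtAt_extend_of_le m hp.2]
  · rw [hPos] at hp
    rcases attacked_extend_iff.1 h with h | ⟨-, hr⟩
    · exact (hs.embed_attacked p hp h).extend
    · obtain rfl := hs.embed_injOn hp href hr.symm
      exact attacked_extend_iff.2 (.inr ⟨hatk, rfl⟩)

lemma d10Admits (hs : Simulation φ ψ d e ι) (hφa : ∀ p, φ ≠ .atom p) (hPd : PTurn d)
    {m_d m_e : Move} (hmd : LegalExt rulesetN d m_d) (hstmt : m_e.statement = m_d.statement) :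
    D10Admits e m_e := fun _ p hp =>
  have hd10 := ((legalExt_rulesetN_iff hs.legal_left).1 hmd).2.1
  (hs.oAsserted _ (hd10 hPd p (hstmt ▸ hp))).resolve_right (hφa p).symm

variable {C : Dialogue → Move → Prop}

lemma translate_pAttack (hs : Simulation φ ψ d e ι) (hφa : ∀ p, φ ≠ .atom p)
    (hφn : ∀ χ, φ ≠ .neg χ) (hPd : PTurn d) (hPe : PTurn e) {m : Move}
    (hmd : LegalExt rulesetN d m) (hwin : PWinningC rulesetN C (d.extend m))
    (hatk : m.isAttack = true) :
    ∃ m_e ι', LegalExt rulesetN e m_e ∧ Simulation φ ψ (d.extend m) (e.extend m_e) ι' := by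
  obtain ⟨a, hst, hstm⟩ := hwin.exists_neg_of_pAttack hs.legal_left hmd hPd hatk
  obtain ⟨⟨-, hpar, -⟩, -⟩ := (legalExt_rulesetN_iff hs.legal_left).1 hmd
  simp only [PTurn, nextPos] at hPd hPe
  obtain ⟨j, hj, hjst⟩ := (hs.oAsserted _ ⟨m.ref, by omega, hst⟩).resolve_right (hφn a).symm
  have hjle := le_length_of_stmtAt_eq_some hjst
  have hme : LegalExt rulesetN e ⟨.form a, true, j⟩ :=
    (legalExt_rulesetN_iff hs.legal_right).2 ⟨⟨by dsimp only; omega, by dsimp only; omega,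
      fun _ => ⟨_, hjst, .neg a⟩, nofun⟩, hs.d10Admits hφa hPd hmd hstm.symm,
      fun _ hj' => by dsimp only at hj'; omega⟩
  exact ⟨_, _, hme, hs.extend_pMoves hPd hPe hmd hme hstm.symm fun _ => ⟨a, hjst⟩⟩

lemma translate_pDefense (hs : Simulation φ ψ d e ι) (hφa : ∀ p, φ ≠ .atom p)
    (hPd : PTurn d) (hPe : PTurn e) {m : Move} (hmd : LegalExt rulesetN d m) {χ : Formula}
    {α : Statement} (hatt : HasAttack e 1 χ α) (hdefends : Defends χ α m.statement) :
    ∃ m_e ι', LegalExt rulesetN e m_e ∧ Simulation φ ψ (d.extend m) (e.extend m_e) ι' := by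
  obtain ⟨r, a, ha, hr, ha_atk, rfl, hst⟩ := hatt
  have hrle := le_length_of_moveAt_eq_some ha
  simp only [PTurn, nextPos] at hPe
  have hme : LegalExt rulesetN e ⟨m.statement, false, r⟩ :=
    (legalExt_rulesetN_iff hs.legal_right).2 ⟨⟨by dsimp only; omega, by dsimp only; omega,
      nofun, fun _ => ⟨a, χ, ha, ha_atk, hst, hdefends⟩⟩, hs.d10Admits hφa hPd hmd rfl, nofun⟩
  exact ⟨_, _, hme, hs.extend_pMoves hPd hPe hmd hme rfl nofun⟩

lemma translate_pMove (hs : Simulation φ ψ d e ι) (hφa : ∀ p, φ ≠ .atom p)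
    (hφn : ∀ χ, φ ≠ .neg χ) (hPd : PTurn d) (hPe : PTurn e) {m : Move} (hmd : LegalExt rulesetN d m)
    (hwin : PWinningC rulesetN C (d.extend m)) :
    (∃ m_e ι', LegalExt rulesetN e m_e ∧ Simulation φ ψ (d.extend m) (e.extend m_e) ι') ∨
      (Simulation φ ψ (d.extend m) e ι ∧ ∃ c, FreshCopy ψ (d.extend m) e ι c) := by
  cases hatk : m.isAttack
  case true => exact .inl (hs.translate_pAttack hφa hφn hPd hPe hmd hwin hatk)
  obtain ⟨⟨hr, hpar, -, hdefends⟩, -⟩ := (legalExt_rulesetN_iff hs.legal_left).1 hmd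
  obtain ⟨a, χ, ha, ha_atk, hst, hdef⟩ := hdefends hatk
  simp only [PTurn, nextPos] at hPd
  rcases hs.oAttack χ a.statement ⟨m.ref, a, ha, by omega, ha_atk, rfl, hst⟩ with
    hatt | ⟨rfl, hα⟩
  · exact .inl (hs.translate_pDefense hφa hPd hPe hmd hatt hdef)
  · have hψ : m.statement = .form ψ := (hα ▸ hdef).eq_of_imp
    refine .inr ⟨hs.extend_left hmd (fun hO => absurd hPd hO) (fun _ h => by simp [hatk] at h)
      (fun h => by simp [hatk] at h), d.moves.length + 1, hPd, by rw [stmtAt_extend_self, hψ],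
      fun h => absurd (h.lt_length hmd.1) (by simp), fun p hp => ?_⟩
    have := hs.embed_le hp
    omega

lemma translate_oMove (hs : Simulation φ ψ d e ι) (hOd : ¬ PTurn d) (hOe : ¬ PTurn e) {m : Move}
    (hme : LegalExt rulesetN e m) :
    ∃ m_d, LegalExt rulesetN d m_d ∧ Simulation φ ψ (d.extend m_d) (e.extend m) ι := by
  obtain ⟨⟨hr, hpar, hattacks, hdefends⟩, -, hD13⟩ :=
    (legalExt_rulesetN_iff hs.legal_right).1 hme
  have hOd' := not_pTurn_iff.1 hOd
  have hOe' := not_pTurn_iff.1 hOe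
  cases hatk : m.isAttack
  case false =>
    obtain ⟨a, χ, ha, ha_atk, hst, hdef⟩ := hdefends hatk
    obtain ⟨b, rfl⟩ := hs.pAttack_neg χ a.statement ⟨m.ref, a, ha, by omega, ha_atk, rfl, hst⟩
    exact (not_defends_neg hdef).elim
  obtain ⟨χ, hχ, hA⟩ := hattacks hatk
  have hp : m.ref ∈ pPositions e := ⟨by omega, by omega⟩
  have hχd : d.stmtAt (ι m.ref) = some (.form χ) := (hs.embed_stmtAt _ hp).trans hχ
  have hιle := hs.embed_le hp
  have hιeven := hs.embed_even _ hp
  have hmd : LegalExt rulesetN d ⟨m.statement, true, ι m.ref⟩ :=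
    (legalExt_rulesetN_iff hs.legal_left).2 ⟨⟨by dsimp only; omega, by dsimp only; omega,
      fun _ => ⟨χ, hχd, hA⟩, nofun⟩, fun hPd => absurd hPd hOd,
      fun _ _ h => hD13 hatk (by omega) (hs.embed_attacked _ hp h)⟩
  exact ⟨_, hmd, hs.extend_oAttack hOd hOe hme hatk hmd⟩

/-- O attacks a fresh copy of `ψ` in `d` the way she attacked `ψ` in `e`. -/
lemma attack_freshCopy (hs : Simulation φ ψ d e ι) (hOd : ¬ PTurn d) (hPe : PTurn e) {c : ℕ}
    (hc : FreshCopy ψ d e ι c) :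
    ∃ m_d, LegalExt rulesetN d m_d ∧ Simulation φ ψ (d.extend m_d) e ι := by
  obtain ⟨hceven, hcst, hcfresh, hcι⟩ := hc
  have hne : e.moves ≠ [] := by
    rintro h
    simp [PTurn, nextPos, h] at hPe
  obtain ⟨β, hβ⟩ := exists_hasAttack_initial hs.legal_right.1 hne
  rw [hs.initial_eq] at hβ
  have hcle := le_length_of_stmtAt_eq_some hcst
  have hOd' := not_pTurn_iff.1 hOd
  have hmd : LegalExt rulesetN d ⟨β, true, c⟩ :=
    (legalExt_rulesetN_iff hs.legal_left).2 ⟨⟨by dsimp only; omega, by dsimp only; omega,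
      fun _ => ⟨ψ, hcst, hβ.attacks hs.legal_right.1⟩, nofun⟩, fun hPd => absurd hPd hOd,
      fun _ _ => hcfresh⟩
  refine ⟨_, hmd, hs.extend_left hmd (fun _ χ hχ => ?_) (fun _ _ χ hχ => ?_) fun _ => hcι⟩
  · obtain ⟨n, m, hmv, hn, -, hstm, -⟩ := hβ
    exact ⟨n, hn, by rw [stmtAt_of_moveAt hmv, hstm, ← hχ]⟩
  · obtain rfl : χ = ψ := by simpa [hcst] using hχ.symm
    exact hβ

end Simulation

theorem Simulation.pWinning {φ ψ : Formula} (hφa : ∀ p, φ ≠ .atom p) (hφn : ∀ χ, φ ≠ .neg χ)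
    {C : Dialogue → Move → Prop} {d : Dialogue} (hwin : PWinningC rulesetN C d) {e : Dialogue}
    {ι : ℕ → ℕ} (hs : Simulation φ ψ d e ι)
    (hmode : (PTurn d ↔ PTurn e) ∨ (¬ PTurn d ∧ PTurn e ∧ ∃ c, FreshCopy ψ d e ι c)) :
    PWinning rulesetN e := by
  induction hwin generalizing e ι with
  | pMove d m hPd hmd _ hwin ih =>
    have hPe : PTurn e := hmode.elim (·.1 hPd) fun h => absurd hPd h.1
    rcases hs.translate_pMove hφa hφn hPd hPe hmd hwin with ⟨m_e, ι', hme, hs'⟩ | ⟨hs', c, hc⟩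
    · exact .pMove e m_e hPe hme trivial (ih hs' (.inl (by simp [pTurn_extend, hPd, hPe])))
    · exact ih hs' (.inr ⟨by simp [pTurn_extend, hPd], hPe, c, hc⟩)
  | oMoves d hOd _ ih =>
    rcases hmode with h | ⟨-, hPe, c, hc⟩
    · have hOe : ¬ PTurn e := (not_congr h).1 hOd
      refine .oMoves e hOe fun m hme => ?_
      obtain ⟨m_d, hmd, hs'⟩ := hs.translate_oMove hOd hOe hme
      exact ih m_d hmd hs' (.inl (by simp [pTurn_extend, hOd, hOe]))
    · obtain ⟨m_d, hmd, hs'⟩ := hs.attack_freshCopy hOd hPe hc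
      exact ih m_d hmd hs' (.inl (by simp [pTurn_extend, hOd, hPe]))

/-- O attacks `φ → ψ` by asserting `φ`, and P defends by asserting `ψ`. -/
def openingDialogue (φ ψ : Formula) : Dialogue :=
  ⟨.imp φ ψ, [⟨.form φ, true, 0⟩, ⟨.form ψ, false, 1⟩]⟩

/-- O's only move is to attack by asserting `φ`; if `φ` is not a negation, P's only reply that
does not lose by `not_pWinningC_of_hasAttack_defends` is to defend with `ψ`. -/
lemma pWinning_openingDialogue {φ ψ : Formula} (hφn : ∀ χ, φ ≠ .neg χ)
    (h : valid rulesetN (.imp φ ψ)) :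
    Legal rulesetN (openingDialogue φ ψ) ∧ PWinning rulesetN (openingDialogue φ ψ) := by
  obtain ⟨hleg, hwin⟩ := h
  have hm₁ : LegalExt rulesetN ⟨.imp φ ψ, []⟩ ⟨.form φ, true, 0⟩ :=
    (legalExt_rulesetN_iff hleg).2 ⟨⟨by simp, by simp, fun _ => ⟨_, rfl, .imp φ ψ⟩, nofun⟩,
      fun h => absurd h (by simp [PTurn, nextPos]),
      fun _ _ h => absurd (h.lt_length hleg.1) (by simp)⟩
  replace hwin : PWinning rulesetN ⟨.imp φ ψ, [⟨.form φ, true, 0⟩]⟩ := by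
    cases hwin with
    | pMove _ _ hP => exact absurd hP (by simp [PTurn, nextPos])
    | oMoves _ _ h => exact h _ hm₁
  cases hwin with
  | oMoves _ hO => exact absurd (by simp [PTurn, nextPos]) hO
  | pMove _ m hP hm _ hwin =>
    obtain ⟨⟨hr, hpar, -, hdefends⟩, -⟩ := (legalExt_rulesetN_iff hm₁).1 hm
    obtain hr : m.ref = 1 := by simp at hr hpar; omega
    cases hatk : m.isAttack
    case true =>
      obtain ⟨a, hst, -⟩ := hwin.exists_neg_of_pAttack hm₁ hm hP hatk
      simp [hr, Dialogue.stmtAt] at hst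
      exact absurd hst (hφn a)
    obtain ⟨a, χ, ha, -, hst, hdef⟩ := hdefends hatk
    simp only [hr, Dialogue.moveAt, Dialogue.extend] at ha
    obtain rfl : a = ⟨.form φ, true, 0⟩ := by simpa using ha.symm
    obtain rfl : χ = .imp φ ψ := by simpa [Dialogue.stmtAt, Dialogue.extend] using hst.symm
    have hψ := hdef.eq_of_imp
    obtain rfl : m = ⟨.form ψ, false, 1⟩ := by
      obtain ⟨s, b, r⟩ := m
      simp_all
    exact ⟨hm, hwin⟩

lemma simulation_openingDialogue {φ ψ : Formula} (hφa : ∀ p, φ ≠ .atom p)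
    (hleg : Legal rulesetN (openingDialogue φ ψ)) :
    Simulation φ ψ (openingDialogue φ ψ) ⟨ψ, []⟩ (fun _ => 2) := by
  have hlen : (openingDialogue φ ψ).moves.length = 2 := rfl
  have no_moves : ∀ n m, (⟨ψ, []⟩ : Dialogue).moveAt n = some m → False := fun n m h => by
    simp [Dialogue.moveAt] at h
  have hD10 : D10 (⟨ψ, []⟩ : Dialogue) := by
    intro n p hn hst
    obtain rfl : n = 0 := by simpa using le_length_of_stmtAt_eq_some hst
    obtain ⟨j, hj, hjodd, hjst⟩ :=
      hleg.2.1 2 p rfl (by simpa [Dialogue.stmtAt, openingDialogue] using hst)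
    obtain rfl : j = 1 := by omega
    exact absurd (by simpa [Dialogue.stmtAt, openingDialogue] using hjst) (hφa p)
  refine ⟨rfl, hleg, ⟨nofun, hD10, fun _ _ _ _ ⟨m, hmv, _⟩ => (no_moves _ m hmv).elim⟩,
    fun χ ⟨j, hj, hst⟩ => ?_, fun χ α ⟨n, m, hmv, hn, _, hα, hst⟩ => ?_,
    fun _ _ ⟨_, m, hmv, _⟩ => (no_moves _ m hmv).elim, fun _ _ => rfl, fun p hp => ?_,
    fun _ _ h => absurd (h.lt_length hleg.1) (by simp [hlen]), fun p hp q hq _ => ?_⟩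
  · have := le_length_of_stmtAt_eq_some hst
    obtain rfl : j = 1 := by omega
    exact .inr (by simpa [Dialogue.stmtAt, openingDialogue] using hst.symm)
  · have := le_length_of_moveAt_eq_some hmv
    have := ne_zero_of_moveAt_eq_some hmv
    obtain rfl : n = 1 := by omega
    obtain rfl : m = ⟨.form φ, true, 0⟩ := by
      simpa [Dialogue.moveAt, openingDialogue] using hmv.symm
    exact .inr ⟨by simpa [Dialogue.stmtAt, openingDialogue] using hst.symm, hα.symm⟩
  · obtain rfl : p = 0 := by simpa [pPositions] using hp.2
    rfl
  · simp only [pPositions, List.length_nil, nonpos_iff_eq_zero] at hp hq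
    rw [hp.2, hq.2]

lemma valid_of_valid_imp {φ ψ : Formula} (hφa : ∀ p, φ ≠ .atom p) (hφn : ∀ χ, φ ≠ .neg χ)
    (h : valid rulesetN (.imp φ ψ)) : valid rulesetN ψ := by
  obtain ⟨hleg, hwin⟩ := pWinning_openingDialogue hφn h
  have hs := simulation_openingDialogue hφa hleg
  exact ⟨hs.legal_right,
    hs.pWinning hφa hφn hwin (.inl (by simp [PTurn, nextPos, openingDialogue]))⟩

/-- (Characterization of N-valid implications) If φ → ψ is N-valid, then
either ψ is N-valid, or φ is atomic, or φ is a negation. -/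
theorem N_implication_characterization (φ ψ : Formula)
    (h : valid rulesetN (.imp φ ψ)) :
    valid rulesetN ψ ∨ (∃ p, φ = .atom p) ∨ (∃ χ, φ = .neg χ) := by
  cases φ with
  | atom p => exact .inr (.inl ⟨p, rfl⟩)
  | neg χ => exact .inr (.inr ⟨χ, rfl⟩)
  | _ => exact .inl (valid_of_valid_imp (by simp) (by simp) h)

end LorenzenDialogues
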